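/- For every pure unit quaternion μ, every real number K ≥ 0, and every real number η ∈ [0, 1], there exists a Hermitian positive semidefinite 2×2 complex matrix H such that for all (z₁, z₂) ∈ ℂ², Φ(H·(z₁, z₂)) = K·(Φ(z₁, z₂) − η·μ·Φ(z₁, z₂)·j). -/

import Mathlib

open Quaternion MeasureTheory
open scoped ComplexOrder

noncomputable section

/-- The imaginary unit `i` of the quaternions. -/
def qi : ℍ[ℝ] := ⟨0, 1, 0, 0⟩

/-- The imaginary unit `j` of the quaternions. -/
def qj : ℍ[ℝ] := ⟨0, 0, 1, 0⟩

/-- The embedding `ι : ℂ → ℍ` sending `a + b·√(−1)` to `a + b·j`. -/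
def iotaC (z : ℂ) : ℍ[ℝ] := ⟨z.re, 0, z.im, 0⟩

/-- The identification `Φ : ℂ² → ℍ`, `Φ(z₁, z₂) = ι(z₁) + i·ι(z₂)`. -/
def PhiMap (z : Fin 2 → ℂ) : ℍ[ℝ] := iotaC (z 0) + qi * iotaC (z 1)

/-- A quaternion is a pure unit quaternion if its real part is `0` and its modulus is `1`. -/
def IsPureUnit (μ : ℍ[ℝ]) : Prop := μ.re = 0 ∧ ‖μ‖ = 1

/-- The quaternion exponential. -/
def qexp (q : ℍ[ℝ]) : ℍ[ℝ] := (NormedSpace.expSeries ℝ ℍ[ℝ]).sum q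

/-- The Euclidean inner product on `ℍ ≅ ℝ⁴`: `⟨p, q⟩` is the real part of `p·q̄`. -/
def qinner (p q : ℍ[ℝ]) : ℝ := (p * star q).re

/-! Writing `μ = a i + b j + c k`, the map `X ↦ -μ X j` becomes under `Φ` the Hermitian matrix
`M = b σ_z + c σ_x - a σ_y`, and `M² = |μ|² = 1`. Take `H = K (1 + η M)`: it is positive
semidefinite since `1 + M = ½ (1 + M)ᴴ (1 + M)` gives
`1 + η M = (1 - η) 1 + (η / 2) (1 + M)ᴴ (1 + M)`. -/

namespace Matrix

variable {n 𝕜 : Type*} [Fintype n] [DecidableEq n] [RCLike 𝕜]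

theorem IsHermitian.posSemidef_one_add_smul_of_mul_self_eq_one {M : Matrix n n 𝕜}
    (hM : M.IsHermitian) (hMM : M * M = 1) {η : ℝ} (hη : η ∈ Set.Icc (0 : ℝ) 1) :
    (1 + η • M).PosSemidef := by
  have hgram : (1 + M)ᴴ * (1 + M) = (2 : ℝ) • (1 + M) := by
    rw [conjTranspose_add, conjTranspose_one, hM.eq]
    simp only [add_mul, mul_add, one_mul, mul_one, hMM, two_smul]
    abel
  have hdecomp :
      1 + η • M = (1 - η) • (1 : Matrix n n 𝕜) + (η / 2) • ((1 + M)ᴴ * (1 + M)) := by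
    rw [hgram, smul_smul, div_mul_cancel₀ η two_ne_zero, smul_add, sub_smul, one_smul]
    abel
  rw [hdecomp]
  exact (PosSemidef.one.smul (sub_nonneg.2 hη.2)).add
    ((posSemidef_conjTranspose_mul_self _).smul (div_nonneg hη.1 zero_le_two))

end Matrix

theorem IsPureUnit.normSq_im {μ : ℍ[ℝ]} (hμ : IsPureUnit μ) : normSq μ.im = 1 := by
  have him : μ.im = μ := by simpa [hμ.1] using μ.re_add_im
  rw [him, normSq_eq_norm_mul_self, hμ.2, mul_one]

theorem PhiMap_add (z w : Fin 2 → ℂ) : PhiMap (z + w) = PhiMap z + PhiMap w := by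
  ext <;> simp only [PhiMap, re_add, imI_add, imJ_add, imK_add, re_mul, imI_mul, imJ_mul,
    imK_mul] <;> simp [iotaC, qi]

theorem PhiMap_smul (r : ℝ) (z : Fin 2 → ℂ) : PhiMap (r • z) = r * PhiMap z := by
  ext <;> simp only [PhiMap, re_add, imI_add, imJ_add, imK_add, re_mul, imI_mul, imJ_mul,
    imK_mul] <;> simp [iotaC, qi]

def pauliMatrix (μ : ℍ[ℝ]) : Matrix (Fin 2) (Fin 2) ℂ :=
  !![μ.imJ, μ.imK + μ.imI * Complex.I; μ.imK - μ.imI * Complex.I, -μ.imJ]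

theorem isHermitian_pauliMatrix (μ : ℍ[ℝ]) : (pauliMatrix μ).IsHermitian := by
  ext i j
  fin_cases i <;> fin_cases j <;> simp [pauliMatrix, Complex.ext_iff]

theorem pauliMatrix_mul_self (μ : ℍ[ℝ]) :
    pauliMatrix μ * pauliMatrix μ = ((normSq μ.im : ℝ) : ℂ) • 1 := by
  ext i j : 2
  apply Complex.ext <;>
    fin_cases i <;> fin_cases j <;> simp [pauliMatrix, normSq_def', sq] <;> ring

theorem PhiMap_pauliMatrix_mulVec {μ : ℍ[ℝ]} (hμ : μ.re = 0) (z : Fin 2 → ℂ) :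
    PhiMap ((pauliMatrix μ).mulVec z) = -(μ * PhiMap z * qj) := by
  ext <;> simp only [PhiMap, re_add, imI_add, imJ_add, imK_add, re_mul, imI_mul, imJ_mul,
    imK_mul, re_neg, imI_neg, imJ_neg, imK_neg] <;>
    simp [iotaC, qi, qj, pauliMatrix, Matrix.vecHead, Matrix.vecTail, hμ] <;> ring

/-- For every pure unit quaternion `μ`, `K ≥ 0` and `η ∈ [0,1]`, the map
`X ↦ K·(X − η·μ·X·j)` on `ℍ ≅ ℂ²` is realized by a Hermitian positive semidefinite matrix. -/
theorem quaternion_to_hermitian (μ : ℍ[ℝ]) (hμ : IsPureUnit μ) (K : ℝ) (hK : 0 ≤ K)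
    (η : ℝ) (hη : η ∈ Set.Icc (0 : ℝ) 1) :
    ∃ H : Matrix (Fin 2) (Fin 2) ℂ, H.PosSemidef ∧
      ∀ z : Fin 2 → ℂ,
        PhiMap (H.mulVec z) =
          (K : ℍ[ℝ]) * (PhiMap z - (η : ℍ[ℝ]) * (μ * PhiMap z * qj)) := by
  have hsq : pauliMatrix μ * pauliMatrix μ = 1 := by
    rw [pauliMatrix_mul_self, hμ.normSq_im, Complex.ofReal_one, one_smul]
  refine ⟨K • (1 + η • pauliMatrix μ), ?_, fun z => ?_⟩
  · exact ((isHermitian_pauliMatrix μ).posSemidef_one_add_smul_of_mul_self_eq_one hsq hη).smul hK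
  · rw [Matrix.smul_mulVec, Matrix.add_mulVec, Matrix.one_mulVec, Matrix.smul_mulVec,
      PhiMap_smul, PhiMap_add, PhiMap_smul, PhiMap_pauliMatrix_mulVec hμ.1, mul_neg,
      ← sub_eq_add_neg]
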